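/- Let r ∈ C²((0,1]) ∩ C([0,1]) with r'(R) > 0 on (0,1] be a solution of the modified equilibrium equation (d/dR)[R^{n−1} Φ̂_{,1}(r(R))] = (n−1) R^{n−2} Φ̂_{,2}(r(R)) with r(1) = λ and r(0) = 0. Then r(R) = λR for all R ∈ [0,1]. -/

import Mathlib

open Real MeasureTheory Filter Set
open scoped ENNReal NNReal

noncomputable section

/-- Radial stored energy `Φ(q, v, …, v) = (κ/n)(qⁿ + (n−1)vⁿ) + h(q v^{n−1})`,
the restriction of `Φ(v₁,…,vₙ) = (κ/n)(v₁ⁿ+⋯+vₙⁿ) + h(v₁⋯vₙ)` to points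
`(q, v, …, v)`. -/
def Phi (n : ℕ) (κ : ℝ) (h : ℝ → ℝ) (q v : ℝ) : ℝ :=
  (κ / n) * (q ^ n + ((n : ℝ) - 1) * v ^ n) + h (q * v ^ (n - 1))

/-- `Φ_{,1}(q, v, …, v) = κ q^{n−1} + v^{n−1} h'(q v^{n−1})`. -/
def Phi1 (n : ℕ) (κ : ℝ) (h' : ℝ → ℝ) (q v : ℝ) : ℝ :=
  κ * q ^ (n - 1) + v ^ (n - 1) * h' (q * v ^ (n - 1))

/-- `Φ_{,2}(q, v, …, v) = κ v^{n−1} + q v^{n−2} h'(q v^{n−1})`. -/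
def Phi2 (n : ℕ) (κ : ℝ) (h' : ℝ → ℝ) (q v : ℝ) : ℝ :=
  κ * v ^ (n - 1) + q * v ^ (n - 2) * h' (q * v ^ (n - 1))

/-- Radial Cauchy stress `T(q,v) = v^{1−n} Φ_{,1}(q,v,…,v) = κ(q/v)^{n−1} + h'(q v^{n−1})`. -/
def Tstress (n : ℕ) (κ : ℝ) (h' : ℝ → ℝ) (q v : ℝ) : ℝ :=
  κ * (q / v) ^ (n - 1) + h' (q * v ^ (n - 1))

/-- The determinant function `δ(R) = r'(R) (r(R)/R)^{n−1}`. -/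
def del (n : ℕ) (r r' : ℝ → ℝ) (R : ℝ) : ℝ :=
  r' R * (r R / R) ^ (n - 1)

/-- Hypotheses on `h : (0,∞) → [0,∞)`: it is `C²` with derivative `h'` and second
derivative `h''`, `h'' > 0`, `h(d) → ∞` as `d → 0⁺`, `h(d)/d → ∞` as `d → ∞`,
`h'(d) → −∞` as `d → 0⁺` and `h'(d) → ∞` as `d → ∞`. -/
structure GoodH (h h' h'' : ℝ → ℝ) : Prop where
  nonneg : ∀ d : ℝ, 0 < d → 0 ≤ h d
  deriv1 : ∀ d : ℝ, 0 < d → HasDerivAt h (h' d) d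
  deriv2 : ∀ d : ℝ, 0 < d → HasDerivAt h' (h'' d) d
  cont2 : ContinuousOn h'' (Set.Ioi 0)
  hpp_pos : ∀ d : ℝ, 0 < d → 0 < h'' d
  lim_zero : Tendsto h (nhdsWithin 0 (Set.Ioi 0)) atTop
  lim_growth : Tendsto (fun d => h d / d) atTop atTop
  dlim_zero : Tendsto h' (nhdsWithin 0 (Set.Ioi 0)) atBot
  dlim_top : Tendsto h' atTop atTop

/-- `r ∈ C²((0,1])`, with `r, r' > 0` on `(0,1]`, solving the radial equilibrium
equation `(d/dR)[R^{n−1} Φ_{,1}(r(R))] = (n−1) R^{n−2} Φ_{,2}(r(R))`. -/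
structure RadialSol (n : ℕ) (κ : ℝ) (h' : ℝ → ℝ) (r r' r'' : ℝ → ℝ) : Prop where
  pos : ∀ R ∈ Set.Ioc (0:ℝ) 1, 0 < r R
  derivPos : ∀ R ∈ Set.Ioc (0:ℝ) 1, 0 < r' R
  hasDeriv : ∀ R ∈ Set.Ioc (0:ℝ) 1, HasDerivWithinAt r (r' R) (Set.Ioc 0 1) R
  hasDeriv2 : ∀ R ∈ Set.Ioc (0:ℝ) 1, HasDerivWithinAt r' (r'' R) (Set.Ioc 0 1) R
  cont2 : ContinuousOn r'' (Set.Ioc 0 1)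
  equil : ∀ R ∈ Set.Ioc (0:ℝ) 1,
    HasDerivWithinAt (fun s => s ^ (n - 1) * Phi1 n κ h' (r' s) (r s / s))
      (((n : ℝ) - 1) * R ^ (n - 2) * Phi2 n κ h' (r' R) (r R / R)) (Set.Ioc 0 1) R

/-- Modified radial stored energy
`Φ̂(q,v,…,v) = (κ/n)qⁿ + h(q v^{n−1}) + κ q v^{n−1}((n−1)/n + ln(v^{n−1}))`. -/
def PhiHat (n : ℕ) (κ : ℝ) (h : ℝ → ℝ) (q v : ℝ) : ℝ :=
  (κ / n) * q ^ n + h (q * v ^ (n - 1)) +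
    κ * (q * v ^ (n - 1)) * (((n : ℝ) - 1) / n + ((n : ℝ) - 1) * Real.log v)

/-- `Φ̂_{,1}(q,v,…,v) = κ q^{n−1} + v^{n−1} h'(q v^{n−1}) + κ v^{n−1}((n−1)/n + (n−1) ln v)`. -/
def PhiHat1 (n : ℕ) (κ : ℝ) (h' : ℝ → ℝ) (q v : ℝ) : ℝ :=
  κ * q ^ (n - 1) + v ^ (n - 1) * h' (q * v ^ (n - 1)) +
    κ * v ^ (n - 1) * (((n : ℝ) - 1) / n + ((n : ℝ) - 1) * Real.log v)

/-- `Φ̂_{,2}(q,v,…,v) = q v^{n−2}(h'(q v^{n−1}) + κ + κ(n−1)(1/n + ln v))`. -/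
def PhiHat2 (n : ℕ) (κ : ℝ) (h' : ℝ → ℝ) (q v : ℝ) : ℝ :=
  q * v ^ (n - 2) *
    (h' (q * v ^ (n - 1)) + κ + κ * (((n : ℝ) - 1) * (1 / n + Real.log v)))

/-- Modified radial Cauchy stress
`T̂(q,v) = κ(q/v)^{n−1} + h'(q v^{n−1}) + (n−1)κ(1/n + ln v)`. -/
def THat (n : ℕ) (κ : ℝ) (h' : ℝ → ℝ) (q v : ℝ) : ℝ :=
  κ * (q / v) ^ (n - 1) + h' (q * v ^ (n - 1)) +
    ((n : ℝ) - 1) * κ * (1 / n + Real.log v)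

/-- `r ∈ C²((0,1])`, with `r, r' > 0` on `(0,1]`, solving the modified radial
equilibrium equation `(d/dR)[R^{n−1} Φ̂_{,1}(r(R))] = (n−1) R^{n−2} Φ̂_{,2}(r(R))`. -/
structure ModRadialSol (n : ℕ) (κ : ℝ) (h' : ℝ → ℝ) (r r' r'' : ℝ → ℝ) : Prop where
  pos : ∀ R ∈ Set.Ioc (0:ℝ) 1, 0 < r R
  derivPos : ∀ R ∈ Set.Ioc (0:ℝ) 1, 0 < r' R
  hasDeriv : ∀ R ∈ Set.Ioc (0:ℝ) 1, HasDerivWithinAt r (r' R) (Set.Ioc 0 1) R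
  hasDeriv2 : ∀ R ∈ Set.Ioc (0:ℝ) 1, HasDerivWithinAt r' (r'' R) (Set.Ioc 0 1) R
  cont2 : ContinuousOn r'' (Set.Ioc 0 1)
  equil : ∀ R ∈ Set.Ioc (0:ℝ) 1,
    HasDerivWithinAt (fun s => s ^ (n - 1) * PhiHat1 n κ h' (r' s) (r s / s))
      (((n : ℝ) - 1) * R ^ (n - 2) * PhiHat2 n κ h' (r' R) (r R / R)) (Set.Ioc 0 1) R

/-!
Write `q = r'`, `v = r / R` and `δ = q v^{n-1}`. Dividing the equilibrium equation by `r^{n-1}`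
turns it into `(T̂(q, v))' = (n-1) κ (q / r) (1 - (q / v)^{n-1})`. As `T̂` is increasing in `q`,
the gap `F = T̂(q, v) - T̂(v, v)` has the sign of `q - v` while `F'` has the opposite sign, so `F²`
is nonincreasing on `(0, 1]`. If `q ≠ v` at some `R₀`, then `q - v` keeps its sign on `(0, R₀]`,
and `v` is monotone there with a limit `L ∈ [0, ∞]` at `0`. By the mean value theorem
`r'(ξ) = v(R)` for some `ξ < R`, so for `0 < L < ∞` the gap `F(ξ)` tends to `0`, against
`F² ≥ F(R₀)² > 0`. For `L = ∞`, `T̂(q, v)` is increasing and its term `(n-1) κ ln v` forces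
`h'(δ(ξ)) < h'(v(R₀)ⁿ)`, although `δ(ξ) ≥ v(R₀)ⁿ`. For `L = 0`,
`Φ_{,1} = κ q^{n-1} + v^{n-1} h'(δ)` can only decrease towards the origin while `h'(δ) < 0`; this
bounds `q` away from `0` near the origin, against `r'(ξ) = v(R) → 0`. Hence `r' = r / R`, and
`r / R` is constant.
-/

open Topology

section MonotoneOfDeriv

variable {I D : Set ℝ} {f f' : ℝ → ℝ}

lemma monotoneOn_of_hasDerivWithinAt_of_subset (hD : Convex ℝ D) (hDI : D ⊆ I)
    (hf : ∀ x ∈ I, HasDerivWithinAt f (f' x) I x) (hf' : ∀ x ∈ interior D, 0 ≤ f' x) :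
    MonotoneOn f D :=
  monotoneOn_of_hasDerivWithinAt_nonneg hD
    (fun x hx => (hf x (hDI hx)).continuousWithinAt.mono hDI)
    (fun x hx => (hf x (hDI (interior_subset hx))).mono (interior_subset.trans hDI)) hf'

lemma antitoneOn_of_hasDerivWithinAt_of_subset (hD : Convex ℝ D) (hDI : D ⊆ I)
    (hf : ∀ x ∈ I, HasDerivWithinAt f (f' x) I x) (hf' : ∀ x ∈ interior D, f' x ≤ 0) :
    AntitoneOn f D :=
  antitoneOn_of_hasDerivWithinAt_nonpos hD
    (fun x hx => (hf x (hDI hx)).continuousWithinAt.mono hDI)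
    (fun x hx => (hf x (hDI (interior_subset hx))).mono (interior_subset.trans hDI)) hf'

lemma le_of_hasDerivWithinAt_of_deriv_nonpos_of_lt {a b c : ℝ} (habI : Icc a b ⊆ I)
    (hf : ∀ x ∈ I, HasDerivWithinAt f (f' x) I x) (hf' : ∀ x ∈ Ioo a b, f x < c → f' x ≤ 0)
    (hb : c ≤ f b) : ∀ x ∈ Icc a b, c ≤ f x := by
  intro x hx
  by_contra! hfx
  have hcont : ContinuousOn f (Icc x b) := fun y hy =>
    (hf y (habI ⟨hx.1.trans hy.1, hy.2⟩)).continuousWithinAt.mono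
      (fun z hz => habI ⟨hx.1.trans hz.1, hz.2⟩)
  set S := Icc x b ∩ f ⁻¹' Ici c
  have hS : IsClosed S := hcont.preimage_isClosed_of_isClosed isClosed_Icc isClosed_Ici
  have hyS : sInf S ∈ S := hS.csInf_mem ⟨b, ⟨hx.2, le_rfl⟩, hb⟩ ⟨x, fun y hy => hy.1.1⟩
  set y := sInf S
  have hxy : x < y := hyS.1.1.lt_of_ne fun h => (h ▸ hfx).not_ge hyS.2
  have hbelow : ∀ z ∈ Ico x y, f z < c := fun z hz => by
    by_contra! hcz
    exact hz.2.not_ge (csInf_le ⟨x, fun y hy => hy.1.1⟩ ⟨⟨hz.1, hz.2.le.trans hyS.1.2⟩, hcz⟩)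
  have hanti : AntitoneOn f (Icc x y) :=
    antitoneOn_of_hasDerivWithinAt_of_subset (convex_Icc x y)
      (fun z hz => habI ⟨hx.1.trans hz.1, hz.2.trans hyS.1.2⟩) hf fun z hz => by
        rw [interior_Icc] at hz
        exact hf' z ⟨hx.1.trans_lt hz.1, hz.2.trans_le hyS.1.2⟩ (hbelow z ⟨hz.1.le, hz.2⟩)
  exact (hanti ⟨le_rfl, hxy.le⟩ ⟨hxy.le, le_rfl⟩ hxy.le).not_gt (hfx.trans_le hyS.2)

end MonotoneOfDeriv

lemma pos_of_pos_of_forall_ne_zero {f : ℝ → ℝ} {a b : ℝ} (hab : a ≤ b)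
    (hf : ContinuousOn f (Icc a b)) (hne : ∀ x ∈ Icc a b, f x ≠ 0) (hb : 0 < f b) : 0 < f a := by
  by_contra! ha
  obtain ⟨x, hx, hfx⟩ := intermediate_value_Icc hab hf ⟨ha, hb.le⟩
  exact hne x hx hfx

lemma PhiHat1_eq_mul_THat (n : ℕ) (κ : ℝ) (h' : ℝ → ℝ) (q : ℝ) {v : ℝ} (hv : v ≠ 0) :
    PhiHat1 n κ h' q v = v ^ (n - 1) * THat n κ h' q v := by
  unfold PhiHat1 THat
  rw [div_pow]
  field_simp

lemma Phi1_eq_mul_THat_sub (n : ℕ) (κ : ℝ) (h' : ℝ → ℝ) (q : ℝ) {v : ℝ} (hv : v ≠ 0) :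
    Phi1 n κ h' q v =
      v ^ (n - 1) * (THat n κ h' q v - ((n : ℝ) - 1) * κ * (1 / n + Real.log v)) := by
  unfold Phi1 THat
  rw [div_pow]
  field_simp
  ring

lemma strictMonoOn_THat {h' : ℝ → ℝ} (hh' : StrictMonoOn h' (Ioi 0)) (n : ℕ) {κ : ℝ}
    (hκ : 0 ≤ κ) {v : ℝ} (hv : 0 < v) : StrictMonoOn (fun q => THat n κ h' q v) (Ioi 0) := by
  intro a ha b hb hab
  have hpow : (a / v) ^ (n - 1) ≤ (b / v) ^ (n - 1) :=
    pow_le_pow_left₀ (div_nonneg (le_of_lt ha) hv.le) (div_le_div_of_nonneg_right hab.le hv.le) _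
  have hderiv : h' (a * v ^ (n - 1)) < h' (b * v ^ (n - 1)) :=
    hh' (mul_pos ha (pow_pos hv _)) (mul_pos hb (pow_pos hv _))
      (mul_lt_mul_of_pos_right hab (pow_pos hv _))
  simp only [THat]
  linarith [mul_le_mul_of_nonneg_left hpow hκ]

lemma hasDerivAt_THat_diag {n : ℕ} (hn : 1 ≤ n) (κ : ℝ) {h' h'' : ℝ → ℝ} {v : ℝ} (hv : 0 < v)
    (hd : HasDerivAt h' (h'' (v ^ n)) (v ^ n)) :
    HasDerivAt (fun w => THat n κ h' w w)
      (h'' (v ^ n) * (n * v ^ (n - 1)) + ((n : ℝ) - 1) * κ / v) v := by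
  have hdiag : (fun w => κ + h' (w ^ n) + ((n : ℝ) - 1) * κ * (1 / n + Real.log w)) =ᶠ[𝓝 v]
      fun w => THat n κ h' w w := by
    filter_upwards [eventually_ne_nhds hv.ne'] with w hw
    rw [THat, div_self hw, one_pow, mul_one, ← pow_succ', Nat.sub_add_cancel hn]
  have := ((hd.comp v (hasDerivAt_pow n v)).const_add κ).add
    (((hasDerivAt_log hv.ne').const_add (1 / (n : ℝ))).const_mul (((n : ℝ) - 1) * κ))
  refine (this.congr_of_eventuallyEq hdiag.symm).congr_deriv ?_
  field_simp

def stressGap (n : ℕ) (κ : ℝ) (h' : ℝ → ℝ) (q v : ℝ) : ℝ :=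
  THat n κ h' q v - THat n κ h' v v

lemma stressGap_pos {n : ℕ} {κ : ℝ} {h' : ℝ → ℝ} (hh' : StrictMonoOn h' (Ioi 0)) (hκ : 0 ≤ κ)
    {q v : ℝ} (hv : 0 < v) (hvq : v < q) : 0 < stressGap n κ h' q v :=
  sub_pos.2 (strictMonoOn_THat hh' n hκ hv hv (hv.trans hvq) hvq)

lemma stressGap_neg {n : ℕ} {κ : ℝ} {h' : ℝ → ℝ} (hh' : StrictMonoOn h' (Ioi 0)) (hκ : 0 ≤ κ)
    {q v : ℝ} (hq : 0 < q) (hqv : q < v) : stressGap n κ h' q v < 0 :=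
  sub_neg.2 (strictMonoOn_THat hh' n hκ (hq.trans hqv) hq (hq.trans hqv) hqv)

lemma stressGap_ne_zero {n : ℕ} {κ : ℝ} {h' : ℝ → ℝ} (hh' : StrictMonoOn h' (Ioi 0))
    (hκ : 0 ≤ κ) {q v : ℝ} (hq : 0 < q) (hv : 0 < v) (hne : q ≠ v) : stressGap n κ h' q v ≠ 0 := by
  rcases hne.lt_or_gt with hqv | hvq
  · exact (stressGap_neg hh' hκ hq hqv).ne
  · exact (stressGap_pos hh' hκ hv hvq).ne'

lemma continuousAt_stressGap {n : ℕ} {κ : ℝ} {h' : ℝ → ℝ} (hh' : ContinuousOn h' (Ioi 0))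
    {L : ℝ} (hL : 0 < L) : ContinuousAt (fun p : ℝ × ℝ => stressGap n κ h' p.1 p.2) (L, L) := by
  have hδ : ContinuousAt h' (L * L ^ (n - 1)) :=
    hh'.continuousAt (Ioi_mem_nhds (mul_pos hL (pow_pos hL _)))
  unfold stressGap THat
  fun_prop (disch := first | exact hL.ne' | exact hδ)

namespace GoodH

variable {h h' h'' : ℝ → ℝ}

lemma continuousOn_deriv (hh : GoodH h h' h'') : ContinuousOn h' (Ioi 0) :=
  fun d hd => (hh.deriv2 d hd).continuousAt.continuousWithinAt

lemma strictMonoOn_deriv (hh : GoodH h h' h'') : StrictMonoOn h' (Ioi 0) :=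
  strictMonoOn_of_hasDerivWithinAt_pos (convex_Ioi 0) hh.continuousOn_deriv
    (fun d hd => (hh.deriv2 d (interior_subset hd)).hasDerivWithinAt)
    (fun d hd => hh.hpp_pos d (interior_subset hd))

lemma exists_deriv_neg (hh : GoodH h h' h'') : ∃ d₀ > 0, h' d₀ < 0 :=
  (eventually_mem_nhdsWithin.and (hh.dlim_zero.eventually (eventually_lt_atBot 0))).exists

end GoodH

-- Along a solution, `r R / R` is the hoop stretch `v` (`stretch` in the names below) and `r'`
-- the radial stretch `q`.
namespace ModRadialSol

variable {n : ℕ} {κ : ℝ} {h h' h'' : ℝ → ℝ} {r r' r'' : ℝ → ℝ}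

lemma stretch_pos (hr : ModRadialSol n κ h' r r' r'') {R : ℝ} (hR : R ∈ Ioc (0 : ℝ) 1) :
    0 < r R / R :=
  div_pos (hr.pos R hR) hR.1

lemma continuousOn_deriv (hr : ModRadialSol n κ h' r r' r'') : ContinuousOn r' (Ioc 0 1) :=
  fun R hR => (hr.hasDeriv2 R hR).continuousWithinAt

lemma hasDerivWithinAt_stretch (hr : ModRadialSol n κ h' r r' r'') {R : ℝ}
    (hR : R ∈ Ioc (0 : ℝ) 1) :
    HasDerivWithinAt (fun s => r s / s) ((r' R - r R / R) / R) (Ioc 0 1) R := by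
  refine ((hr.hasDeriv R hR).div (hasDerivWithinAt_id R _) hR.1.ne').congr_deriv ?_
  have hR0 : R ≠ 0 := hR.1.ne'
  simp only [id]
  field_simp

lemma continuousOn_stretch (hr : ModRadialSol n κ h' r r' r'') :
    ContinuousOn (fun s => r s / s) (Ioc 0 1) :=
  fun _ hR => (hr.hasDerivWithinAt_stretch hR).continuousWithinAt

lemma exists_deriv_eq_stretch (hr : ModRadialSol n κ h' r r' r'')
    (hcont : ContinuousOn r (Icc 0 1)) (h0 : r 0 = 0) {R : ℝ} (hR : R ∈ Ioc (0 : ℝ) 1) :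
    ∃ ξ ∈ Ioo 0 R, r' ξ = r R / R := by
  have hd : ∀ x ∈ Ioo 0 R, HasDerivAt r (r' x) x := fun x hx =>
    (hr.hasDeriv x ⟨hx.1, hx.2.le.trans hR.2⟩).hasDerivAt
      (Ioc_mem_nhds hx.1 (hx.2.trans_le hR.2))
  obtain ⟨ξ, hξ, hslope⟩ :=
    exists_hasDerivAt_eq_slope r r' hR.1 (hcont.mono (Icc_subset_Icc le_rfl hR.2)) hd
  exact ⟨ξ, hξ, by rw [hslope, h0, sub_zero, sub_zero]⟩

lemma stretch_monotoneOn (hr : ModRadialSol n κ h' r r' r'') {b : ℝ} (hb : b ≤ 1)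
    (hsign : ∀ R ∈ Ioo 0 b, r R / R ≤ r' R) : MonotoneOn (fun s => r s / s) (Ioc 0 b) :=
  monotoneOn_of_hasDerivWithinAt_of_subset (convex_Ioc 0 b) (Ioc_subset_Ioc_right hb)
    (fun _ => hr.hasDerivWithinAt_stretch) fun R hR => by
      rw [interior_Ioc] at hR
      exact div_nonneg (sub_nonneg.2 (hsign R hR)) hR.1.le

lemma stretch_antitoneOn (hr : ModRadialSol n κ h' r r' r'') {b : ℝ} (hb : b ≤ 1)
    (hsign : ∀ R ∈ Ioo 0 b, r' R ≤ r R / R) : AntitoneOn (fun s => r s / s) (Ioc 0 b) :=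
  antitoneOn_of_hasDerivWithinAt_of_subset (convex_Ioc 0 b) (Ioc_subset_Ioc_right hb)
    (fun _ => hr.hasDerivWithinAt_stretch) fun R hR => by
      rw [interior_Ioc] at hR
      exact div_nonpos_of_nonpos_of_nonneg (sub_nonpos.2 (hsign R hR)) hR.1.le

lemma hasDerivWithinAt_THat (hn : 2 ≤ n) (hr : ModRadialSol n κ h' r r' r'') {R : ℝ}
    (hR : R ∈ Ioc (0 : ℝ) 1) :
    HasDerivWithinAt (fun s => THat n κ h' (r' s) (r s / s))
      (((n : ℝ) - 1) * κ * (r' R / r R) * (1 - (r' R / (r R / R)) ^ (n - 1))) (Ioc 0 1) R := by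
  have hrR := hr.pos R hR
  have hquot := (hr.equil R hR).div ((hr.hasDeriv R hR).pow (n - 1)) (pow_ne_zero _ hrR.ne')
  have heq : EqOn (fun s => THat n κ h' (r' s) (r s / s))
      (fun s => s ^ (n - 1) * PhiHat1 n κ h' (r' s) (r s / s) / r s ^ (n - 1)) (Ioc 0 1) :=
    fun s hs => by
      dsimp only
      rw [PhiHat1_eq_mul_THat _ _ _ _ (hr.stretch_pos hs).ne', ← mul_assoc, ← mul_pow,
        mul_div_cancel₀ _ hs.1.ne', mul_div_cancel_left₀ _ (pow_ne_zero _ (hr.pos s hs).ne')]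
  refine (hquot.congr heq (heq hR)).congr_deriv ?_
  obtain ⟨k, rfl⟩ : ∃ k, n = k + 2 := ⟨n - 2, by omega⟩
  have hR0 : R ≠ 0 := hR.1.ne'
  simp only [Pi.pow_apply, PhiHat1, PhiHat2, show k + 2 - 1 = k + 1 by omega,
    show k + 2 - 2 = k by omega,
    show k + 1 - 1 = k by omega]
  generalize h' (r' R * (r R / R) ^ (k + 1)) = H
  generalize Real.log (r R / R) = L
  have hrv : r R = r R / R * R := by field_simp
  generalize hv : r R / R = v at hrv ⊢
  have hv0 : v ≠ 0 := hv ▸ (hr.stretch_pos hR).ne'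
  rw [hrv]
  push_cast
  simp only [div_pow]
  field_simp
  ring

lemma THat_antitoneOn (hn : 2 ≤ n) (hκ : 0 ≤ κ) (hr : ModRadialSol n κ h' r r' r'') {b : ℝ}
    (hb : b ≤ 1) (hsign : ∀ R ∈ Ioo 0 b, r R / R ≤ r' R) :
    AntitoneOn (fun s => THat n κ h' (r' s) (r s / s)) (Ioc 0 b) :=
  antitoneOn_of_hasDerivWithinAt_of_subset (convex_Ioc 0 b) (Ioc_subset_Ioc_right hb)
    (fun _ => hr.hasDerivWithinAt_THat hn) fun R hR => by
      rw [interior_Ioc] at hR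
      have hR1 : R ∈ Ioc (0 : ℝ) 1 := ⟨hR.1, hR.2.le.trans hb⟩
      have hn1 : (0 : ℝ) ≤ n - 1 := by norm_num; omega
      exact mul_nonpos_of_nonneg_of_nonpos
        (mul_nonneg (mul_nonneg hn1 hκ) (div_nonneg (hr.derivPos R hR1).le (hr.pos R hR1).le))
        (sub_nonpos.2 (one_le_pow₀ ((one_le_div (hr.stretch_pos hR1)).2 (hsign R hR))))

lemma THat_monotoneOn (hn : 2 ≤ n) (hκ : 0 ≤ κ) (hr : ModRadialSol n κ h' r r' r'') {b : ℝ}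
    (hb : b ≤ 1) (hsign : ∀ R ∈ Ioo 0 b, r' R ≤ r R / R) :
    MonotoneOn (fun s => THat n κ h' (r' s) (r s / s)) (Ioc 0 b) :=
  monotoneOn_of_hasDerivWithinAt_of_subset (convex_Ioc 0 b) (Ioc_subset_Ioc_right hb)
    (fun _ => hr.hasDerivWithinAt_THat hn) fun R hR => by
      rw [interior_Ioc] at hR
      have hR1 : R ∈ Ioc (0 : ℝ) 1 := ⟨hR.1, hR.2.le.trans hb⟩
      have hn1 : (0 : ℝ) ≤ n - 1 := by norm_num; omega
      have hq := hr.derivPos R hR1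
      exact mul_nonneg
        (mul_nonneg (mul_nonneg hn1 hκ) (div_nonneg hq.le (hr.pos R hR1).le))
        (sub_nonneg.2 (pow_le_one₀ (div_nonneg hq.le (hr.stretch_pos hR1).le)
          ((div_le_one (hr.stretch_pos hR1)).2 (hsign R hR))))

lemma hasDerivWithinAt_stressGap (hn : 2 ≤ n) (hh : GoodH h h' h'')
    (hr : ModRadialSol n κ h' r r' r'') {R : ℝ} (hR : R ∈ Ioc (0 : ℝ) 1) :
    HasDerivWithinAt (fun s => stressGap n κ h' (r' s) (r s / s))
      (((n : ℝ) - 1) * κ * (r' R / r R) * (1 - (r' R / (r R / R)) ^ (n - 1)) -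
        (h'' ((r R / R) ^ n) * (n * (r R / R) ^ (n - 1)) + ((n : ℝ) - 1) * κ / (r R / R)) *
          ((r' R - r R / R) / R)) (Ioc 0 1) R :=
  (hr.hasDerivWithinAt_THat hn hR).sub
    ((hasDerivAt_THat_diag (by omega) κ (hr.stretch_pos hR)
      (hh.deriv2 _ (pow_pos (hr.stretch_pos hR) n))).comp_hasDerivWithinAt_of_eq R
      (hr.hasDerivWithinAt_stretch hR) rfl)

lemma stressGap_sq_antitoneOn (hn : 2 ≤ n) (hκ : 0 ≤ κ) (hh : GoodH h h' h'')
    (hr : ModRadialSol n κ h' r r' r'') :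
    AntitoneOn (fun s => stressGap n κ h' (r' s) (r s / s) ^ 2) (Ioc 0 1) :=
  antitoneOn_of_hasDerivWithinAt_of_subset (convex_Ioc 0 1) subset_rfl
    (fun _ hR => (hr.hasDerivWithinAt_stressGap hn hh hR).pow 2) fun R hR => by
      rw [interior_Ioc] at hR
      have hR1 : R ∈ Ioc (0 : ℝ) 1 := ⟨hR.1, hR.2.le⟩
      have hv := hr.stretch_pos hR1
      have hq := hr.derivPos R hR1
      have hn1 : (0 : ℝ) ≤ n - 1 := by norm_num; omega
      have hc : 0 ≤ ((n : ℝ) - 1) * κ * (r' R / r R) :=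
        mul_nonneg (mul_nonneg hn1 hκ) (div_nonneg hq.le (hr.pos R hR1).le)
      have hG : 0 < h'' ((r R / R) ^ n) * (n * (r R / R) ^ (n - 1)) +
          ((n : ℝ) - 1) * κ / (r R / R) :=
        add_pos_of_pos_of_nonneg
          (mul_pos (hh.hpp_pos _ (pow_pos hv n)) (mul_pos (by norm_num; omega) (pow_pos hv _)))
          (div_nonneg (mul_nonneg hn1 hκ) hv.le)
      simp only [Nat.cast_ofNat, Nat.add_one_sub_one, pow_one]
      rcases lt_trichotomy (r' R) (r R / R) with hqv | hqv | hvq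
      · have hF := stressGap_neg (n := n) hh.strictMonoOn_deriv hκ hq hqv
        have hψ := mul_nonneg hc (sub_nonneg.2 (pow_le_one₀ (n := n - 1)
          (div_nonneg hq.le hv.le) ((div_le_one hv).2 hqv.le)))
        have hdv : (r' R - r R / R) / R < 0 := div_neg_of_neg_of_pos (sub_neg.2 hqv) hR.1
        nlinarith [mul_neg_of_pos_of_neg hG hdv]
      · simp [stressGap, hqv]
      · have hF := stressGap_pos (n := n) hh.strictMonoOn_deriv hκ hv hvq
        have hψ := mul_nonpos_of_nonneg_of_nonpos hc (sub_nonpos.2 (one_le_pow₀ (n := n - 1)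
          ((one_le_div hv).2 hvq.le)))
        have hdv : 0 < (r' R - r R / R) / R := div_pos (sub_pos.2 hvq) hR.1
        nlinarith [mul_pos hG hdv]

lemma deriv_ne_stretch (hn : 2 ≤ n) (hκ : 0 ≤ κ) (hh : GoodH h h' h'')
    (hr : ModRadialSol n κ h' r r' r'') {Rb : ℝ} (hRb : Rb ∈ Ioc (0 : ℝ) 1)
    (hne : r' Rb ≠ r Rb / Rb) {R : ℝ} (hR : R ∈ Ioc 0 Rb) : r' R ≠ r R / R := by
  intro heq
  have hR1 : R ∈ Ioc (0 : ℝ) 1 := ⟨hR.1, hR.2.trans hRb.2⟩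
  have hle := hr.stressGap_sq_antitoneOn hn hκ hh hR1 hRb hR.2
  have hpos := sq_pos_of_ne_zero <|
    stressGap_ne_zero (n := n) hh.strictMonoOn_deriv hκ (hr.derivPos Rb hRb) (hr.stretch_pos hRb)
      hne
  have hzero : stressGap n κ h' (r' R) (r R / R) = 0 := by rw [heq, stressGap, sub_self]
  simp only [hzero] at hle
  linarith

lemma stretch_lt_deriv (hn : 2 ≤ n) (hκ : 0 ≤ κ) (hh : GoodH h h' h'')
    (hr : ModRadialSol n κ h' r r' r'') {Rb : ℝ} (hRb : Rb ∈ Ioc (0 : ℝ) 1)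
    (hlt : r Rb / Rb < r' Rb) : ∀ R ∈ Ioc 0 Rb, r R / R < r' R := fun _ hR =>
  sub_pos.1 <| pos_of_pos_of_forall_ne_zero (f := fun s => r' s - r s / s) hR.2
    ((hr.continuousOn_deriv.sub hr.continuousOn_stretch).mono
      (Icc_subset_Ioc_iff hR.2 |>.2 ⟨hR.1, hRb.2⟩))
    (fun _ hs => sub_ne_zero.2 <| hr.deriv_ne_stretch hn hκ hh hRb hlt.ne'
      ⟨hR.1.trans_le hs.1, hs.2⟩)
    (sub_pos.2 hlt)

lemma deriv_lt_stretch (hn : 2 ≤ n) (hκ : 0 ≤ κ) (hh : GoodH h h' h'')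
    (hr : ModRadialSol n κ h' r r' r'') {Rb : ℝ} (hRb : Rb ∈ Ioc (0 : ℝ) 1)
    (hlt : r' Rb < r Rb / Rb) : ∀ R ∈ Ioc 0 Rb, r' R < r R / R := fun _ hR =>
  sub_pos.1 <| pos_of_pos_of_forall_ne_zero (f := fun s => r s / s - r' s) hR.2
    ((hr.continuousOn_stretch.sub hr.continuousOn_deriv).mono
      (Icc_subset_Ioc_iff hR.2 |>.2 ⟨hR.1, hRb.2⟩))
    (fun _ hs => sub_ne_zero.2 <| (hr.deriv_ne_stretch hn hκ hh hRb hlt.ne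
      ⟨hR.1.trans_le hs.1, hs.2⟩).symm)
    (sub_pos.2 hlt)

lemma false_of_tendsto_stretch_pos (hn : 2 ≤ n) (hκ : 0 ≤ κ) (hh : GoodH h h' h'')
    (hr : ModRadialSol n κ h' r r' r'') (hcont : ContinuousOn r (Icc 0 1)) (h0 : r 0 = 0)
    {Rb : ℝ} (hRb : Rb ∈ Ioc (0 : ℝ) 1) (hne : r' Rb ≠ r Rb / Rb) {L : ℝ} (hL : 0 < L)
    (hv : Tendsto (fun R => r R / R) (𝓝[>] 0) (𝓝 L)) : False := by
  have hFRb : 0 < stressGap n κ h' (r' Rb) (r Rb / Rb) ^ 2 := sq_pos_of_ne_zero <|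
    stressGap_ne_zero hh.strictMonoOn_deriv hκ (hr.derivPos Rb hRb) (hr.stretch_pos hRb) hne
  have hsmall : ∀ᶠ p in 𝓝 (L, L),
      stressGap n κ h' p.1 p.2 ^ 2 < stressGap n κ h' (r' Rb) (r Rb / Rb) ^ 2 := by
    refine ((continuousAt_stressGap (n := n) (κ := κ) hh.continuousOn_deriv hL).pow 2).eventually
      (gt_mem_nhds ?_)
    simpa [stressGap] using hFRb
  rw [nhds_prod_eq] at hsmall
  obtain ⟨V, hV, hVV⟩ := mem_prod_self_iff.1 hsmall
  obtain ⟨ρ, hρ, hρV⟩ := mem_nhdsGT_iff_exists_Ioo_subset.1 (hv hV)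
  have hm : 0 < min ρ Rb := lt_min hρ hRb.1
  have hR : min ρ Rb / 2 ∈ Ioo 0 ρ := ⟨half_pos hm, by linarith [min_le_left ρ Rb]⟩
  have hRRb : min ρ Rb / 2 ≤ Rb := by linarith [min_le_right ρ Rb]
  obtain ⟨ξ, hξ, hqξ⟩ := hr.exists_deriv_eq_stretch hcont h0 ⟨hR.1, hRRb.trans hRb.2⟩
  have hgap := hVV (mk_mem_prod (hρV hR) (hρV ⟨hξ.1, hξ.2.trans hR.2⟩))
  simp only [mem_ofPred_eq, ← hqξ] at hgap
  have hξRb : ξ ≤ Rb := (hξ.2.trans_le hRRb).le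
  exact hgap.not_ge (hr.stressGap_sq_antitoneOn hn hκ hh ⟨hξ.1, hξRb.trans hRb.2⟩ hRb hξRb)

lemma hasDerivWithinAt_Phi1 (hn : 2 ≤ n) (hr : ModRadialSol n κ h' r r' r'') {R : ℝ}
    (hR : R ∈ Ioc (0 : ℝ) 1) :
    HasDerivWithinAt (fun s => Phi1 n κ h' (r' s) (r s / s))
      (((n : ℝ) - 1) * ((r R / R) ^ (n - 1) / R) * (κ * (1 - (r' R / (r R / R)) ^ (n - 1)) +
        h' (r' R * (r R / R) ^ (n - 1)) * (r' R / (r R / R) - 1))) (Ioc 0 1) R := by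
  have hv := hr.hasDerivWithinAt_stretch hR
  have hprod := (hv.pow (n - 1)).mul ((hr.hasDerivWithinAt_THat hn hR).sub
    (((hv.log (hr.stretch_pos hR).ne').const_add (1 / (n : ℝ))).const_mul (((n : ℝ) - 1) * κ)))
  have heq : EqOn (fun s => Phi1 n κ h' (r' s) (r s / s)) (fun s => (r s / s) ^ (n - 1) *
      (THat n κ h' (r' s) (r s / s) - ((n : ℝ) - 1) * κ * (1 / n + Real.log (r s / s))))
      (Ioc 0 1) :=
    fun s hs => Phi1_eq_mul_THat_sub _ _ _ _ (hr.stretch_pos hs).ne'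
  refine (hprod.congr heq (heq hR)).congr_deriv ?_
  obtain ⟨k, rfl⟩ : ∃ k, n = k + 2 := ⟨n - 2, by omega⟩
  have hR0 : R ≠ 0 := hR.1.ne'
  have hr0 : r R ≠ 0 := (hr.pos R hR).ne'
  simp only [Pi.pow_apply, Pi.sub_apply, THat, show k + 2 - 1 = k + 1 by omega,
    show k + 1 - 1 = k by omega]
  generalize h' (r' R * (r R / R) ^ (k + 1)) = H
  generalize Real.log (r R / R) = L
  have hrv : r R = r R / R * R := by field_simp
  generalize hv : r R / R = v at hrv ⊢
  have hv0 : v ≠ 0 := hv ▸ (hr.stretch_pos hR).ne'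
  rw [hrv]
  push_cast
  simp only [div_pow]
  field_simp
  ring

lemma le_Phi1_of_le (hn : 2 ≤ n) (hκ : 0 ≤ κ) (hr : ModRadialSol n κ h' r r' r'') {a b c : ℝ}
    (ha : 0 < a) (hb : b ≤ 1) (hsign : ∀ x ∈ Ioo a b, r x / x < r' x)
    (hlarge : ∀ x ∈ Ioo a b, 0 ≤ h' (r' x * (r x / x) ^ (n - 1)) → c ≤ κ * r' x ^ (n - 1))
    (hcb : c ≤ Phi1 n κ h' (r' b) (r b / b)) :
    ∀ x ∈ Icc a b, c ≤ Phi1 n κ h' (r' x) (r x / x) := by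
  refine le_of_hasDerivWithinAt_of_deriv_nonpos_of_lt (I := Ioc 0 1)
    (fun x hx => ⟨ha.trans_le hx.1, hx.2.trans hb⟩) (fun _ hx => hr.hasDerivWithinAt_Phi1 hn hx)
    (fun x hx hZx => ?_) hcb
  have hx1 : x ∈ Ioc (0 : ℝ) 1 := ⟨ha.trans hx.1, hx.2.le.trans hb⟩
  have hv := hr.stretch_pos hx1
  have hδ : h' (r' x * (r x / x) ^ (n - 1)) < 0 := by
    by_contra! hδ
    refine hZx.not_ge ((hlarge x hx hδ).trans ?_)
    simp only [Phi1]
    nlinarith [pow_pos hv (n - 1)]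
  have ht : 1 < r' x / (r x / x) := (one_lt_div hv).2 (hsign x hx)
  have hn1 : (0 : ℝ) ≤ n - 1 := by norm_num; omega
  refine mul_nonpos_of_nonneg_of_nonpos (mul_nonneg hn1 (div_nonneg (pow_pos hv _).le hx1.1.le))
    (add_nonpos (mul_nonpos_of_nonneg_of_nonpos hκ (sub_nonpos.2 (one_le_pow₀ ht.le)))
      (mul_nonpos_of_nonpos_of_nonneg hδ.le (sub_nonneg.2 ht.le)))

lemma exists_pos_Phi1 (hn : 2 ≤ n) (hκ : 0 < κ) (hr : ModRadialSol n κ h' r r' r'') {Rb : ℝ}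
    (hRb : Rb ∈ Ioc (0 : ℝ) 1) (hsign : ∀ R ∈ Ioc 0 Rb, r R / R < r' R)
    (hv : Tendsto (fun R => r R / R) (𝓝[>] 0) (𝓝 0)) :
    ∃ ε ∈ Ioc 0 Rb, 0 < Phi1 n κ h' (r' ε) (r ε / ε) := by
  set c₁ := THat n κ h' (r' Rb) (r Rb / Rb)
  have hn1 : (0 : ℝ) < n - 1 := sub_pos.2 (Nat.one_lt_cast.2 hn)
  have hnear : ∀ᶠ R in 𝓝[>] 0, R ∈ Ioc 0 Rb := Ioc_mem_nhdsGT hRb.1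
  obtain ⟨ε, hε, hvε⟩ := (hnear.and
    (hv.eventually (gt_mem_nhds (exp_pos (c₁ / ((n - 1) * κ) - 1 / n))))).exists
  refine ⟨ε, hε, ?_⟩
  have hε1 : ε ∈ Ioc (0 : ℝ) 1 := ⟨hε.1, hε.2.trans hRb.2⟩
  have hvpos := hr.stretch_pos hε1
  have hlog := (log_lt_iff_lt_exp hvpos).2 hvε
  have hc₁ : c₁ ≤ THat n κ h' (r' ε) (r ε / ε) :=
    hr.THat_antitoneOn hn hκ.le hRb.2 (fun R hR => (hsign R ⟨hR.1, hR.2.le⟩).le) hε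
      ⟨hRb.1, le_rfl⟩ hε.2
  rw [Phi1_eq_mul_THat_sub _ _ _ _ hvpos.ne']
  refine mul_pos (pow_pos hvpos _) (sub_pos.2 (lt_of_lt_of_le ?_ hc₁))
  calc ((n : ℝ) - 1) * κ * (1 / n + Real.log (r ε / ε))
      < ((n : ℝ) - 1) * κ * (c₁ / ((n - 1) * κ)) := by gcongr; linarith
    _ = c₁ := by field_simp

lemma le_deriv_pow_of_deriv_nonneg (hκ : 0 ≤ κ) (hh : GoodH h h' h'')
    (hr : ModRadialSol n κ h' r r' r'') {d₀ : ℝ} (hd₀ : 0 < d₀) (hhd₀ : h' d₀ < 0) {ε : ℝ}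
    (hε : ε ∈ Ioc (0 : ℝ) 1) (hvle : ∀ s ∈ Ioc 0 ε, r s / s ≤ r ε / ε) {s : ℝ} (hs : s ∈ Ioc 0 ε)
    (hδ : 0 ≤ h' (r' s * (r s / s) ^ (n - 1))) :
    κ * (d₀ / (r ε / ε) ^ (n - 1)) ^ (n - 1) ≤ κ * r' s ^ (n - 1) := by
  have hs1 : s ∈ Ioc (0 : ℝ) 1 := ⟨hs.1, hs.2.trans hε.2⟩
  have hvs := hr.stretch_pos hs1
  have hd₀δ : d₀ ≤ r' s * (r s / s) ^ (n - 1) := by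
    by_contra! hlt
    exact (hh.strictMonoOn_deriv (mul_pos (hr.derivPos s hs1) (pow_pos hvs _)) hd₀ hlt).not_ge
      (hhd₀.le.trans hδ)
  have hq : d₀ / (r ε / ε) ^ (n - 1) ≤ r' s :=
    calc d₀ / (r ε / ε) ^ (n - 1) ≤ d₀ / (r s / s) ^ (n - 1) :=
          div_le_div_of_nonneg_left hd₀.le (pow_pos hvs _)
            (pow_le_pow_left₀ hvs.le (hvle s hs) _)
      _ ≤ r' s := (div_le_iff₀ (pow_pos hvs _)).2 hd₀δ
  exact mul_le_mul_of_nonneg_left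
    (pow_le_pow_left₀ (div_nonneg hd₀.le (pow_pos (hr.stretch_pos hε) _).le) hq _) hκ

lemma exists_le_deriv_pow (hn : 2 ≤ n) (hκ : 0 < κ) (hh : GoodH h h' h'')
    (hr : ModRadialSol n κ h' r r' r'') {Rb : ℝ} (hRb : Rb ∈ Ioc (0 : ℝ) 1)
    (hsign : ∀ R ∈ Ioc 0 Rb, r R / R < r' R) (hv : Tendsto (fun R => r R / R) (𝓝[>] 0) (𝓝 0)) :
    ∃ c > 0, ∃ ε ∈ Ioc 0 Rb, ∀ s ∈ Ioc 0 ε, c ≤ κ * r' s ^ (n - 1) := by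
  obtain ⟨ε, hε, hZε⟩ := hr.exists_pos_Phi1 hn hκ hRb hsign hv
  obtain ⟨d₀, hd₀, hhd₀⟩ := hh.exists_deriv_neg
  have hε1 : ε ∈ Ioc (0 : ℝ) 1 := ⟨hε.1, hε.2.trans hRb.2⟩
  have hvle : ∀ s ∈ Ioc 0 ε, r s / s ≤ r ε / ε := fun s hs =>
    hr.stretch_monotoneOn hRb.2 (fun R hR => (hsign R ⟨hR.1, hR.2.le⟩).le)
      ⟨hs.1, hs.2.trans hε.2⟩ hε hs.2
  have hlarge := fun s => hr.le_deriv_pow_of_deriv_nonneg hκ.le hh hd₀ hhd₀ hε1 hvle (s := s)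
  set c := min (Phi1 n κ h' (r' ε) (r ε / ε)) (κ * (d₀ / (r ε / ε) ^ (n - 1)) ^ (n - 1))
  have hc : 0 < c := lt_min hZε (by have := hr.stretch_pos hε1; positivity)
  refine ⟨c, hc, ε, hε, fun s hs => ?_⟩
  by_cases hδ : 0 ≤ h' (r' s * (r s / s) ^ (n - 1))
  · exact (min_le_right _ _).trans (hlarge s hs hδ)
  have hZ := hr.le_Phi1_of_le hn hκ.le hs.1 hε1.2
    (fun x hx => hsign x ⟨hs.1.trans hx.1, hx.2.le.trans hε.2⟩)
    (fun x hx => (min_le_right _ _).trans ∘ hlarge x ⟨hs.1.trans hx.1, hx.2.le⟩)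
    (min_le_left _ _) s ⟨le_rfl, hs.2⟩
  have hneg := mul_neg_of_pos_of_neg (pow_pos (hr.stretch_pos ⟨hs.1, hs.2.trans hε1.2⟩) (n - 1))
    (not_le.1 hδ)
  exact hZ.trans (by simp only [Phi1]; linarith)

lemma false_of_tendsto_stretch_zero (hn : 2 ≤ n) (hκ : 0 < κ) (hh : GoodH h h' h'')
    (hr : ModRadialSol n κ h' r r' r'') (hcont : ContinuousOn r (Icc 0 1)) (h0 : r 0 = 0)
    {Rb : ℝ} (hRb : Rb ∈ Ioc (0 : ℝ) 1) (hsign : ∀ R ∈ Ioc 0 Rb, r R / R < r' R)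
    (hv : Tendsto (fun R => r R / R) (𝓝[>] 0) (𝓝 0)) : False := by
  obtain ⟨c, hc, ε, hε, hbound⟩ := hr.exists_le_deriv_pow hn hκ hh hRb hsign hv
  have hnear : ∀ᶠ R in 𝓝[>] 0, R ∈ Ioc 0 ε := Ioc_mem_nhdsGT hε.1
  obtain ⟨R, hR, hvR⟩ :=
    (hnear.and (hv.eventually (gt_mem_nhds (lt_min one_pos (div_pos hc hκ))))).exists
  have hR1 : R ∈ Ioc (0 : ℝ) 1 := ⟨hR.1, hR.2.trans (hε.2.trans hRb.2)⟩
  obtain ⟨ξ, hξ, hqξ⟩ := hr.exists_deriv_eq_stretch hcont h0 hR1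
  have hcξ := hbound ξ ⟨hξ.1, hξ.2.le.trans hR.2⟩
  rw [hqξ] at hcξ
  have hvR1 : r R / R ≤ 1 := (hvR.trans_le (min_le_left _ _)).le
  have hpow : (r R / R) ^ (n - 1) ≤ r R / R :=
    pow_le_of_le_one (hr.stretch_pos hR1).le hvR1 (by omega)
  have hvc : κ * (r R / R) < c := by
    have := hvR.trans_le (min_le_right _ _)
    rwa [lt_div_iff₀' hκ] at this
  nlinarith

lemma false_of_not_bddAbove_stretch (hn : 2 ≤ n) (hκ : 0 < κ) (hh : GoodH h h' h'')
    (hr : ModRadialSol n κ h' r r' r'') (hcont : ContinuousOn r (Icc 0 1)) (h0 : r 0 = 0)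
    {Rb : ℝ} (hRb : Rb ∈ Ioc (0 : ℝ) 1) (hsign : ∀ R ∈ Ioc 0 Rb, r' R < r R / R)
    (hunb : ¬BddAbove ((fun R => r R / R) '' Ioo 0 Rb)) : False := by
  have hsign' : ∀ R ∈ Ioo 0 Rb, r' R ≤ r R / R := fun R hR => (hsign R ⟨hR.1, hR.2.le⟩).le
  have hvanti := hr.stretch_antitoneOn hRb.2 hsign'
  have hRbmem : Rb ∈ Ioc 0 Rb := ⟨hRb.1, le_rfl⟩
  set c₁ := THat n κ h' (r' Rb) (r Rb / Rb)
  set d₁ := (r Rb / Rb) ^ n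
  have hn1 : (0 : ℝ) < n - 1 := sub_pos.2 (Nat.one_lt_cast.2 hn)
  obtain ⟨_, ⟨R, hR, rfl⟩, hvR⟩ :=
    not_bddAbove_iff.1 hunb (exp ((c₁ - h' d₁) / ((n - 1) * κ) - 1 / n))
  have hRmem : R ∈ Ioc 0 Rb := ⟨hR.1, hR.2.le⟩
  obtain ⟨ξ, hξ, hqξ⟩ := hr.exists_deriv_eq_stretch hcont h0 ⟨hR.1, hR.2.le.trans hRb.2⟩
  have hξmem : ξ ∈ Ioc 0 Rb := ⟨hξ.1, hξ.2.le.trans hRmem.2⟩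
  have hξ1 : ξ ∈ Ioc (0 : ℝ) 1 := ⟨hξ.1, hξmem.2.trans hRb.2⟩
  have hvξ := hr.stretch_pos hξ1
  have hvRbR : r Rb / Rb ≤ r R / R := hvanti hRmem hRbmem hRmem.2
  have hvRξ : r R / R ≤ r ξ / ξ := hvanti hξmem hRmem hξ.2.le
  -- the determinant at `ξ` is at least `d₁`, so `h'` there is at least `h' d₁` ...
  have hδ : h' d₁ ≤ h' (r' ξ * (r ξ / ξ) ^ (n - 1)) := by
    refine hh.strictMonoOn_deriv.monotoneOn (pow_pos (hr.stretch_pos hRb) n)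
      (mul_pos (hr.derivPos ξ hξ1) (pow_pos hvξ _)) ?_
    rw [hqξ, ← Nat.sub_add_cancel (one_le_two.trans hn), pow_succ', Nat.add_sub_cancel]
    exact mul_le_mul hvRbR (pow_le_pow_left₀ (hr.stretch_pos hRb).le (hvRbR.trans hvRξ) _)
      (pow_pos (hr.stretch_pos hRb) _).le (hvRbR.trans' (hr.stretch_pos hRb).le)
  -- ... while the logarithmic term of `T̂` exceeds `c₁ - h' d₁`, contradicting `T̂(ξ) ≤ c₁`
  have hlog := (lt_log_iff_exp_lt hvξ).2 (hvR.trans_le hvRξ)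
  have hlogterm : c₁ - h' d₁ < ((n : ℝ) - 1) * κ * (1 / n + Real.log (r ξ / ξ)) :=
    calc c₁ - h' d₁ = ((n : ℝ) - 1) * κ * ((c₁ - h' d₁) / ((n - 1) * κ)) := by field_simp
      _ < ((n : ℝ) - 1) * κ * (1 / n + Real.log (r ξ / ξ)) := by gcongr; linarith
  have hψ : THat n κ h' (r' ξ) (r ξ / ξ) ≤ c₁ :=
    hr.THat_monotoneOn hn hκ.le hRb.2 hsign' hξmem hRbmem hξmem.2
  have hκt : 0 ≤ κ * (r' ξ / (r ξ / ξ)) ^ (n - 1) :=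
    mul_nonneg hκ.le (pow_nonneg (div_nonneg (hr.derivPos ξ hξ1).le hvξ.le) _)
  simp only [THat] at hψ
  linarith

lemma deriv_eq_stretch (hn : 2 ≤ n) (hκ : 0 < κ) (hh : GoodH h h' h'')
    (hr : ModRadialSol n κ h' r r' r'') (hcont : ContinuousOn r (Icc 0 1)) (h0 : r 0 = 0)
    {Rb : ℝ} (hRb : Rb ∈ Ioc (0 : ℝ) 1) : r' Rb = r Rb / Rb := by
  by_contra hne
  have hIoo : (Ioo (0 : ℝ) Rb).Nonempty := nonempty_Ioo.2 hRb.1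
  have hvpos : ∀ y ∈ (fun R => r R / R) '' Ioo 0 Rb, 0 < y := by
    rintro _ ⟨R, hR, rfl⟩
    exact hr.stretch_pos ⟨hR.1, hR.2.le.trans hRb.2⟩
  rcases Ne.lt_or_gt hne with hlt | hgt
  · have hsign := hr.deriv_lt_stretch hn hκ.le hh hRb hlt
    have hanti := (hr.stretch_antitoneOn hRb.2 fun R hR =>
      (hsign R ⟨hR.1, hR.2.le⟩).le).mono Ioo_subset_Ioc_self
    by_cases hbdd : BddAbove ((fun R => r R / R) '' Ioo 0 Rb)
    · have hlim := hanti.tendsto_nhdsWithin_Ioo_right hIoo hbdd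
      obtain ⟨x, hx⟩ := hIoo
      exact hr.false_of_tendsto_stretch_pos hn hκ.le hh hcont h0 hRb hne
        ((hvpos _ (mem_image_of_mem _ hx)).trans_le (le_csSup hbdd (mem_image_of_mem _ hx))) hlim
    · exact hr.false_of_not_bddAbove_stretch hn hκ hh hcont h0 hRb hsign hbdd
  · have hsign := hr.stretch_lt_deriv hn hκ.le hh hRb hgt
    have hmono := (hr.stretch_monotoneOn hRb.2 fun R hR =>
      (hsign R ⟨hR.1, hR.2.le⟩).le).mono Ioo_subset_Ioc_self
    have hlim := hmono.tendsto_nhdsWithin_Ioo_right hIoo ⟨0, fun y hy => (hvpos y hy).le⟩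
    rcases (Real.sInf_nonneg fun y hy => (hvpos y hy).le).eq_or_lt with hL | hL
    · rw [← hL] at hlim
      exact hr.false_of_tendsto_stretch_zero hn hκ hh hcont h0 hRb hsign hlim
    · exact hr.false_of_tendsto_stretch_pos hn hκ.le hh hcont h0 hRb hne hL hlim

end ModRadialSol

/-- a solution of the modified equilibrium equation with `r(0) = 0`
and `r(1) = λ` is the homogeneous deformation `r(R) = λR`. -/
theorem stmt14 (n : ℕ) (hn : 2 ≤ n) (κ : ℝ) (hκ : 0 < κ)
    (h h' h'' : ℝ → ℝ) (hh : GoodH h h' h'') (lam : ℝ)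
    (r r' r'' : ℝ → ℝ) (hr : ModRadialSol n κ h' r r' r'')
    (hcont : ContinuousOn r (Set.Icc 0 1)) (h0 : r 0 = 0) (hbc : r 1 = lam) :
    ∀ R ∈ Set.Icc (0:ℝ) 1, r R = lam * R := by
  have hq : ∀ R ∈ Ioo (0 : ℝ) 1, r' R = r R / R := fun R hR =>
    hr.deriv_eq_stretch hn hκ hh hcont h0 ⟨hR.1, hR.2.le⟩
  have h1 : (1 : ℝ) ∈ Ioc 0 1 := ⟨one_pos, le_rfl⟩
  intro R hR
  rcases hR.1.eq_or_lt with rfl | hpos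
  · rw [h0, mul_zero]
  have hR1 : R ∈ Ioc 0 1 := ⟨hpos, hR.2⟩
  have hconst : r R / R = r 1 / 1 := le_antisymm
    (hr.stretch_monotoneOn le_rfl (fun x hx => (hq x hx).ge) hR1 h1 hR.2)
    (hr.stretch_antitoneOn le_rfl (fun x hx => (hq x hx).le) hR1 h1 hR.2)
  rwa [hbc, div_one, div_eq_iff hpos.ne'] at hconst

end
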